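/- With Laplacian L_Q of a connected weighted graph (Q_{ij} > 0 exactly on edges of a connected graph), Z = diag(ζ_i) with ζ_i > 0, ∇C_o strictly increasing bijective, ∇C_i(u) = ∇C_o(ζ_i u), and u ∈ ℝⁿ: the quantity uᵀ Z L_Q (∇C_1(u_1),…,∇C_n(u_n)) is nonnegative, and it equals zero if and only if the vector (∇C_1(u_1),…,∇C_n(u_n)) is a scalar multiple of the all-ones vector. -/
import Mathlib


open scoped BigOperators 
open Matrix

/-- the cross term `uᵀ Z L_Q ∇C(u)` is nonnegative, and vanishes iff the
marginal cost vector is a multiple of the all-ones vector, for a connected graph. -/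
theorem cross_term_nonneg_and_zero_iff
    (n : ℕ) (Q : Matrix (Fin n) (Fin n) ℝ)
    (hsymm : ∀ i j, Q i j = Q j i)
    (hnonneg : ∀ i j, i ≠ j → 0 ≤ Q i j)
    (hdiag : ∀ i, Q i i = 0)
    (hconn : (SimpleGraph.fromRel (fun i j : Fin n => 0 < Q i j)).Connected)
    (L : Matrix (Fin n) (Fin n) ℝ)
    (hL : ∀ i j, L i j = if i = j then ∑ j' ∈ Finset.univ.erase i, Q i j' else -Q i j)
    (ζ : Fin n → ℝ) (hζ : ∀ i, 0 < ζ i)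
    (DCo : ℝ → ℝ) (hmono : StrictMono DCo) (hbij : Function.Bijective DCo)
    (u : Fin n → ℝ) :
    0 ≤ u ⬝ᵥ (Matrix.diagonal ζ *ᵥ (L *ᵥ fun i => DCo (ζ i * u i))) ∧
    (u ⬝ᵥ (Matrix.diagonal ζ *ᵥ (L *ᵥ fun i => DCo (ζ i * u i))) = 0 ↔
      ∃ c : ℝ, (fun i => DCo (ζ i * u i)) = fun _ => c) := by
  set w : Fin n → ℝ := fun i => ζ i * u i with hw
  set v : Fin n → ℝ := fun i => DCo (ζ i * u i) with hv
  have hvw : ∀ i, v i = DCo (w i) := fun i => rfl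
  have hLv : ∀ i, (L *ᵥ v) i = ∑ j, Q i j * (v i - v j) := by
    intro i
    have h1 : (L *ᵥ v) i = ∑ j, L i j * v j := rfl
    rw [h1]
    rw [← Finset.sum_erase_add _ _ (Finset.mem_univ i),
        ← Finset.sum_erase_add Finset.univ (fun j => Q i j * (v i - v j)) (Finset.mem_univ i)]
    have h2 : ∀ j ∈ Finset.univ.erase i, L i j * v j = -(Q i j * v j) := by
      intro j hj
      rw [hL, if_neg (fun h => (Finset.mem_erase.1 hj).1 h.symm)]
      ring
    rw [Finset.sum_congr rfl h2, hL, if_pos rfl, hdiag]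
    have h3 : ∑ j ∈ Finset.univ.erase i, Q i j * (v i - v j)
        = (∑ j ∈ Finset.univ.erase i, Q i j) * v i
          - ∑ j ∈ Finset.univ.erase i, Q i j * v j := by
      rw [Finset.sum_mul, ← Finset.sum_sub_distrib]
      exact Finset.sum_congr rfl fun j _ => by ring
    rw [h3, Finset.sum_neg_distrib]
    ring
  have hS : u ⬝ᵥ (Matrix.diagonal ζ *ᵥ (L *ᵥ v))
      = ∑ i, ∑ j, Q i j * (w i * (v i - v j)) := by
    have h0 : u ⬝ᵥ (Matrix.diagonal ζ *ᵥ (L *ᵥ v))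
        = ∑ i, u i * (ζ i * (L *ᵥ v) i) := by
      refine Finset.sum_congr rfl fun i _ => ?_
      rw [Matrix.mulVec_diagonal]
    rw [h0]
    refine Finset.sum_congr rfl fun i _ => ?_
    rw [hLv, Finset.mul_sum, Finset.mul_sum]
    refine Finset.sum_congr rfl fun j _ => ?_
    simp only [hw]
    ring
  have hswap : ∑ i, ∑ j, Q i j * (w i * (v i - v j))
      = ∑ i, ∑ j, Q i j * (w j * (v j - v i)) := by
    rw [Finset.sum_comm]
    refine Finset.sum_congr rfl fun i _ => Finset.sum_congr rfl fun j _ => ?_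
    rw [hsymm j i]
  have h2S : 2 * (∑ i, ∑ j, Q i j * (w i * (v i - v j)))
      = ∑ i, ∑ j, Q i j * ((w i - w j) * (v i - v j)) := by
    rw [two_mul]
    nth_rewrite 2 [hswap]
    rw [← Finset.sum_add_distrib]
    refine Finset.sum_congr rfl fun i _ => ?_
    rw [← Finset.sum_add_distrib]
    exact Finset.sum_congr rfl fun j _ => by ring
  have hterm : ∀ i j, 0 ≤ Q i j * ((w i - w j) * (v i - v j)) := by
    intro i j
    rcases eq_or_ne i j with rfl | hne
    · simp [hdiag]
    · refine mul_nonneg (hnonneg i j hne) ?_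
      rw [hvw i, hvw j]
      rcases le_total (w i) (w j) with h | h
      · have h' : DCo (w i) ≤ DCo (w j) := hmono.le_iff_le.2 h
        nlinarith
      · have h' : DCo (w j) ≤ DCo (w i) := hmono.le_iff_le.2 h
        nlinarith
  have hsum_nonneg : 0 ≤ ∑ i, ∑ j, Q i j * ((w i - w j) * (v i - v j)) :=
    Finset.sum_nonneg fun i _ => Finset.sum_nonneg fun j _ => hterm i j
  have hSnonneg : 0 ≤ u ⬝ᵥ (Matrix.diagonal ζ *ᵥ (L *ᵥ v)) := by
    rw [hS]; linarith
  refine ⟨hSnonneg, ?_, ?_⟩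
  · -- zero implies constant
    intro h0
    have hX : ∑ i, ∑ j, Q i j * (w i * (v i - v j)) = 0 := hS.symm.trans h0
    have hY : ∑ i, ∑ j, Q i j * ((w i - w j) * (v i - v j)) = 0 := by
      rw [← h2S, hX, mul_zero]
    have hall : ∀ i ∈ Finset.univ, (∑ j, Q i j * ((w i - w j) * (v i - v j))) = 0 :=
      (Finset.sum_eq_zero_iff_of_nonneg
        (fun i _ => Finset.sum_nonneg fun j _ => hterm i j)).1 hY
    have hall2 : ∀ i j, Q i j * ((w i - w j) * (v i - v j)) = 0 := fun i j =>
      (Finset.sum_eq_zero_iff_of_nonneg (fun j _ => hterm i j)).1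
        (hall i (Finset.mem_univ i)) j (Finset.mem_univ j)
    have hedge : ∀ i j, 0 < Q i j → v i = v j := by
      intro i j hq
      have hprod : (w i - w j) * (v i - v j) = 0 := by
        rcases mul_eq_zero.1 (hall2 i j) with h | h
        · exact absurd h (ne_of_gt hq)
        · exact h
      rw [hvw i, hvw j] at hprod ⊢
      have hwij : w i = w j := by
        by_contra hne
        rcases lt_or_gt_of_ne hne with hlt | hlt
        · have h1 := hmono hlt; nlinarith
        · have h1 := hmono hlt; nlinarith
      rw [hwij]
    have hadj : ∀ {i j : Fin n},
        (SimpleGraph.fromRel fun i j : Fin n => 0 < Q i j).Adj i j → v i = v j := by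
      intro i j h
      rw [SimpleGraph.fromRel_adj] at h
      rcases h.2 with hq | hq
      · exact hedge i j hq
      · exact (hedge j i hq).symm
    have hwalk : ∀ {i j : Fin n}
        (p : (SimpleGraph.fromRel fun i j : Fin n => 0 < Q i j).Walk i j), v i = v j := by
      intro i j p
      induction p with
      | nil => rfl
      | cons h p ih => exact (hadj h).trans ih
    obtain ⟨i0⟩ := hconn.nonempty
    refine ⟨v i0, funext fun i => ?_⟩
    obtain ⟨p⟩ := hconn.preconnected i i0
    exact hwalk p
  · -- constant implies zero
    rintro ⟨c, hc⟩
    rw [hS]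
    refine Finset.sum_eq_zero fun i _ => Finset.sum_eq_zero fun j _ => ?_
    have : v i - v j = 0 := by rw [hc]; ring
    rw [this, mul_zero, mul_zero]
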